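/- For any graph G of order n with no isolated vertices, n/(2(n-1)) ≤ R_{-1}(G) ≤ ⌊n/2⌋, with equality in the lower bound if and only if G is complete. -/

import Mathlib

/-!
Write `2 R₋₁(G) = ∑_v s(v)` with `s(v) = d_v⁻¹ ∑_{u ∼ v} d_u⁻¹`. Since all degrees lie between
`1` and `n - 1`, every share satisfies `(n - 1)⁻¹ ≤ s(v) ≤ 1`, and the lower bound is attained at
`v` exactly when all neighbours of `v` are universal. For odd `n` some vertex `v` has degree at
least `2`; the deficits `1 - s(w)` of `v` and of its neighbours then add up to at least `1`,
so `∑_v s(v) ≤ n - 1`.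
-/

open BigOperators

noncomputable section
open scoped Classical

/-- The general Randić index `R₋₁(G) = Σ_{uv ∈ E(G)} 1/(d_u d_v)` (over unordered
edges), written as half the sum over ordered adjacent pairs. -/
def randicIndexNegOne {V : Type} [Fintype V] (G : SimpleGraph V) : ℝ :=
  (1 / 2) * ∑ k, ∑ l, if G.Adj k l then ((G.degree k : ℝ) * (G.degree l : ℝ))⁻¹ else 0

open Finset

namespace SimpleGraph

variable {V : Type} [Fintype V] (G : SimpleGraph V)

def randicShare (v : V) : ℝ :=
  (G.degree v : ℝ)⁻¹ * ∑ u ∈ G.neighborFinset v, (G.degree u : ℝ)⁻¹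

theorem randicIndexNegOne_eq_half_sum_randicShare :
    randicIndexNegOne G = 1 / 2 * ∑ v, G.randicShare v := by
  rw [randicIndexNegOne]
  congr 1
  refine sum_congr rfl fun v _ => ?_
  rw [randicShare, mul_sum, neighborFinset_eq_filter, sum_filter]
  simp only [mul_inv]

variable {G}

theorem one_le_degree_of_adj {u v : V} (h : G.Adj u v) : (1 : ℝ) ≤ G.degree u := by
  exact_mod_cast (G.degree_pos_iff_exists_adj u).2 ⟨v, h⟩

variable (G)

theorem degree_le_card_sub_one (u : V) : (G.degree u : ℝ) ≤ Fintype.card V - 1 := by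
  have h : (G.degree u : ℝ) + 1 ≤ Fintype.card V := by exact_mod_cast G.degree_lt_card_verts u
  linarith

theorem cast_degree_eq_card_sub_one_iff (u : V) :
    (G.degree u : ℝ) = Fintype.card V - 1 ↔ G.IsUniversal u := by
  rw [← degree_eq_card_sub_one, eq_sub_iff_add_eq]
  norm_cast
  have := G.degree_lt_card_verts u
  omega

theorem randicShare_le_one (v : V) : G.randicShare v ≤ 1 := by
  calc G.randicShare v ≤ (G.degree v : ℝ)⁻¹ * ∑ _u ∈ G.neighborFinset v, (1 : ℝ) :=
        mul_le_mul_of_nonneg_left (sum_le_sum fun u hu => inv_le_one_of_one_le₀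
          (one_le_degree_of_adj ((G.mem_neighborFinset v u).1 hu).symm)) (by positivity)
    _ ≤ 1 := by
        rw [sum_const, card_neighborFinset_eq_degree, nsmul_one]
        exact inv_mul_le_one_of_le₀ le_rfl (Nat.cast_nonneg _)

variable {G}

theorem randicShare_le_of_adj {u v : V} (h : G.Adj v u) :
    G.randicShare v ≤ 1 - (G.degree v : ℝ)⁻¹ * (1 - (G.degree u : ℝ)⁻¹) := by
  have hu : u ∈ G.neighborFinset v := (G.mem_neighborFinset v u).2 h
  have hdv : (1 : ℝ) ≤ G.degree v := one_le_degree_of_adj h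
  have hrest : ∑ l ∈ (G.neighborFinset v).erase u, (G.degree l : ℝ)⁻¹ ≤ G.degree v - 1 := by
    calc ∑ l ∈ (G.neighborFinset v).erase u, (G.degree l : ℝ)⁻¹
        ≤ ∑ _l ∈ (G.neighborFinset v).erase u, (1 : ℝ) := by
          refine sum_le_sum fun l hl => inv_le_one_of_one_le₀ (one_le_degree_of_adj (v := v) ?_)
          exact ((G.mem_neighborFinset v l).1 (mem_of_mem_erase hl)).symm
      _ = G.degree v - 1 := by
          rw [sum_const, card_erase_of_mem hu, card_neighborFinset_eq_degree, nsmul_one,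
            Nat.cast_pred ((G.degree_pos_iff_exists_adj v).2 ⟨u, h⟩)]
  rw [randicShare, ← add_sum_erase _ _ hu]
  calc (G.degree v : ℝ)⁻¹ * ((G.degree u : ℝ)⁻¹ +
        ∑ l ∈ (G.neighborFinset v).erase u, (G.degree l : ℝ)⁻¹)
      ≤ (G.degree v : ℝ)⁻¹ * ((G.degree u : ℝ)⁻¹ + (G.degree v - 1)) := by gcongr
    _ = 1 - (G.degree v : ℝ)⁻¹ * (1 - (G.degree u : ℝ)⁻¹) := by
        field_simp
        ring

theorem inv_card_sub_one_eq_mul_sum {v : V} (hv : 0 < G.degree v) :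
    ((Fintype.card V : ℝ) - 1)⁻¹ =
      (G.degree v : ℝ)⁻¹ * ∑ _u ∈ G.neighborFinset v, ((Fintype.card V : ℝ) - 1)⁻¹ := by
  rw [sum_const, card_neighborFinset_eq_degree, nsmul_eq_mul, ← mul_assoc,
    inv_mul_cancel₀ (by positivity), one_mul]

theorem inv_card_sub_one_le_inv_degree_of_adj {u v : V} (h : G.Adj v u) :
    ((Fintype.card V : ℝ) - 1)⁻¹ ≤ (G.degree u : ℝ)⁻¹ :=
  inv_anti₀ (by linarith [one_le_degree_of_adj h.symm]) (G.degree_le_card_sub_one u)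

theorem inv_card_sub_one_le_randicShare {v : V} (hv : 0 < G.degree v) :
    ((Fintype.card V : ℝ) - 1)⁻¹ ≤ G.randicShare v := by
  rw [inv_card_sub_one_eq_mul_sum hv, randicShare]
  exact mul_le_mul_of_nonneg_left (sum_le_sum fun u hu =>
    inv_card_sub_one_le_inv_degree_of_adj ((G.mem_neighborFinset v u).1 hu)) (by positivity)

theorem randicShare_eq_inv_card_sub_one_iff {v : V} (hv : 0 < G.degree v) :
    G.randicShare v = ((Fintype.card V : ℝ) - 1)⁻¹ ↔ ∀ u, G.Adj v u → G.IsUniversal u := by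
  rw [eq_comm, inv_card_sub_one_eq_mul_sum hv, randicShare,
    mul_right_inj' (inv_ne_zero (by positivity)),
    sum_eq_sum_iff_of_le fun u hu =>
      inv_card_sub_one_le_inv_degree_of_adj ((G.mem_neighborFinset v u).1 hu)]
  simp only [mem_neighborFinset, inv_inj, eq_comm (a := ((Fintype.card V : ℝ) - 1)),
    cast_degree_eq_card_sub_one_iff]

theorem sum_const_inv_card_sub_one :
    ∑ _v : V, ((Fintype.card V : ℝ) - 1)⁻¹ =
      (Fintype.card V : ℝ) * ((Fintype.card V : ℝ) - 1)⁻¹ := by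
  rw [sum_const, card_univ, nsmul_eq_mul]

theorem card_mul_inv_card_sub_one_le_sum_randicShare (hiso : ∀ v, 0 < G.degree v) :
    (Fintype.card V : ℝ) * ((Fintype.card V : ℝ) - 1)⁻¹ ≤ ∑ v, G.randicShare v := by
  rw [← sum_const_inv_card_sub_one]
  exact sum_le_sum fun v _ => inv_card_sub_one_le_randicShare (hiso v)

theorem sum_randicShare_eq_iff (hiso : ∀ v, 0 < G.degree v) :
    ∑ v, G.randicShare v = (Fintype.card V : ℝ) * ((Fintype.card V : ℝ) - 1)⁻¹ ↔ G = ⊤ := by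
  rw [← sum_const_inv_card_sub_one, eq_comm,
    sum_eq_sum_iff_of_le fun v _ => inv_card_sub_one_le_randicShare (hiso v),
    eq_top_iff_forall_isUniversal]
  simp only [mem_univ, true_implies, eq_comm (a := ((Fintype.card V : ℝ) - 1)⁻¹),
    randicShare_eq_inv_card_sub_one_iff (hiso _)]
  refine ⟨fun h u => ?_, fun h v u _ => h u⟩
  obtain ⟨v, hv⟩ := (G.degree_pos_iff_exists_adj u).1 (hiso u)
  exact h v u hv.symm

variable (G)

theorem sum_randicShare_le_card : ∑ v, G.randicShare v ≤ Fintype.card V := by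
  simpa using sum_le_sum fun v (_ : v ∈ univ) => G.randicShare_le_one v

variable {G}

theorem sum_randicShare_le_card_sub_one {v : V} (hv : 2 ≤ G.degree v) :
    ∑ w, G.randicShare w ≤ Fintype.card V - 1 := by
  have hdv : (G.degree v : ℝ)⁻¹ ≤ 1 / 2 := by
    rw [one_div]; exact inv_anti₀ two_pos (by exact_mod_cast hv)
  set S := ∑ u ∈ G.neighborFinset v, (G.degree u : ℝ)⁻¹
  have hS : 0 ≤ S := sum_nonneg fun u _ => by positivity
  have hshare : G.randicShare v ≤ S / 2 := by
    rw [randicShare, div_eq_mul_one_div, mul_comm S]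
    exact mul_le_mul_of_nonneg_right hdv hS
  -- each neighbour `u` of `v` already loses `d_u⁻¹ (1 - d_v⁻¹) ≥ d_u⁻¹ / 2` through the edge `uv`
  have hnbr : S / 2 ≤ ∑ u ∈ G.neighborFinset v, (1 - G.randicShare u) := by
    rw [sum_div]
    refine sum_le_sum fun u hu => ?_
    have hle := randicShare_le_of_adj ((G.mem_neighborFinset v u).1 hu).symm
    have : (G.degree u : ℝ)⁻¹ * (1 / 2) ≤ (G.degree u : ℝ)⁻¹ * (1 - (G.degree v : ℝ)⁻¹) :=
      mul_le_mul_of_nonneg_left (by linarith) (by positivity)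
    linarith
  have hdeficit : 1 ≤ ∑ w ∈ insert v (G.neighborFinset v), (1 - G.randicShare w) := by
    rw [sum_insert (G.notMem_neighborFinset_self v)]
    linarith
  have htotal : ∑ w ∈ insert v (G.neighborFinset v), (1 - G.randicShare w) ≤
      ∑ w, (1 - G.randicShare w) :=
    sum_le_sum_of_subset_of_nonneg (subset_univ _) fun w _ _ =>
      sub_nonneg.2 (G.randicShare_le_one w)
  have hsum : ∑ w, (1 - G.randicShare w) = Fintype.card V - ∑ w, G.randicShare w := by
    rw [sum_sub_distrib, sum_const, card_univ, nsmul_one]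
  linarith

theorem exists_two_le_degree_of_odd_card (hiso : ∀ v, 0 < G.degree v)
    (hodd : Odd (Fintype.card V)) : ∃ v, 2 ≤ G.degree v := by
  by_contra! h
  have hdeg : ∀ v, G.degree v = 1 := fun v => by have := hiso v; have := h v; omega
  have heven := G.even_card_odd_degree_vertices
  simp only [hdeg, odd_one, filter_true_of_mem fun _ _ => trivial, card_univ] at heven
  exact Nat.not_even_iff_odd.2 hodd heven

theorem sum_randicShare_le_two_mul_half_card (hiso : ∀ v, 0 < G.degree v) :
    ∑ v, G.randicShare v ≤ 2 * ((Fintype.card V / 2 : ℕ) : ℝ) := by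
  have hdiv := Nat.div_add_mod (Fintype.card V) 2
  rcases Nat.mod_two_eq_zero_or_one (Fintype.card V) with h0 | h1
  · have hn : (Fintype.card V : ℝ) = 2 * ((Fintype.card V / 2 : ℕ) : ℝ) := by
      rw [h0] at hdiv; exact_mod_cast hdiv.symm
    linarith [G.sum_randicShare_le_card]
  · obtain ⟨v, hv⟩ := exists_two_le_degree_of_odd_card hiso (Nat.odd_iff.2 h1)
    have hn : (Fintype.card V : ℝ) = 2 * ((Fintype.card V / 2 : ℕ) : ℝ) + 1 := by
      rw [h1] at hdiv; exact_mod_cast hdiv.symm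
    linarith [sum_randicShare_le_card_sub_one hv]

end SimpleGraph

open SimpleGraph in
/-- for a graph `G` of order `n` with no isolated vertices,
`n/(2(n-1)) ≤ R₋₁(G) ≤ ⌊n/2⌋`, with equality in the lower bound iff `G` is complete. -/
theorem randicIndexNegOne_bounds {V : Type} [Fintype V] (G : SimpleGraph V)
    (hiso : ∀ v, 0 < G.degree v) :
    ((Fintype.card V : ℝ) / (2 * ((Fintype.card V : ℝ) - 1)) ≤ randicIndexNegOne G ∧
      randicIndexNegOne G ≤ ((Fintype.card V / 2 : ℕ) : ℝ)) ∧
    (randicIndexNegOne G = (Fintype.card V : ℝ) / (2 * ((Fintype.card V : ℝ) - 1)) ↔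
      G = ⊤) := by
  have hbound : (Fintype.card V : ℝ) / (2 * ((Fintype.card V : ℝ) - 1)) =
      1 / 2 * ((Fintype.card V : ℝ) * ((Fintype.card V : ℝ) - 1)⁻¹) := by
    rw [div_eq_mul_inv, mul_inv]; ring
  rw [randicIndexNegOne_eq_half_sum_randicShare, hbound, ← sum_randicShare_eq_iff hiso]
  refine ⟨⟨?_, ?_⟩, ⟨fun h => ?_, fun h => by rw [h]⟩⟩
  · linarith [card_mul_inv_card_sub_one_le_sum_randicShare hiso]
  · linarith [sum_randicShare_le_two_mul_half_card hiso]
  · linarith
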